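/- arXiv:2404.12559 — 2 statements merged into one kernel-verified Lean document; each statement's English description precedes it below -/
import Mathlib

section
/- Let G be a finite simple undirected graph, let S ⊆ V be a nonempty set with G[S] connected, and let u₁, u₂, …, u_ℓ be an enumeration of the neighbor set N(S). Then for every set C with S ⊊ C ⊆ V such that G[C] is connected, there is exactly one index i ∈ {1, …, ℓ} such that uᵢ ∈ C and u_j ∉ C for all j > i. Consequently, the families A_i := {C : S ⊊ C ⊆ V, G[C] connected, uᵢ ∈ C, and u_j ∉ C for all j > i}, for i = 1, …, ℓ, are pairwise disjoint and their union is the family of all connected sets C with S ⊊ C ⊆ V. -/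
private lemma cross_walk {α : Type*} (H : SimpleGraph α) (T : Set α) :
    ∀ {a b : α}, H.Walk a b → a ∈ T → b ∉ T →
      ∃ v w, v ∈ T ∧ w ∉ T ∧ H.Adj v w := by
  intro a b p
  induction p with
  | nil => intro h1 h2; exact absurd h1 h2
  | cons h q ih =>
    intro ha hb
    rename_i x c y
    by_cases hc : c ∈ T
    · exact ih hc hb
    · exact ⟨x, c, ha, hc, h⟩

/-- Let `S` be a nonempty connected set and `u₁, …, u_ℓ` an enumeration of `N(S)`.
Then every connected set `C` with `S ⊊ C` contains exactly one `uᵢ` such that no `u_j`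
with `j > i` lies in `C`; hence the families
`A_i = {C : S ⊊ C, G[C] connected, uᵢ ∈ C, u_j ∉ C for j > i}` are pairwise disjoint and
cover all connected proper supersets of `S`. -/
theorem unique_last_neighbor_index {V : Type*} [Fintype V] (G : SimpleGraph V)
    (S : Set V) (hS : S.Nonempty) (hSconn : (G.induce S).Connected)
    (ℓ : ℕ) (u : Fin ℓ → V) (hinj : Function.Injective u)
    (hrange : Set.range u = (⋃ v ∈ S, G.neighborSet v) \ S) :
    (∀ C : Set V, S ⊂ C → (G.induce C).Connected →
      ∃! i : Fin ℓ, u i ∈ C ∧ ∀ j : Fin ℓ, i < j → u j ∉ C) ∧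
    (∀ i i' : Fin ℓ, i ≠ i' →
      Disjoint {C : Set V | S ⊂ C ∧ (G.induce C).Connected ∧ u i ∈ C ∧
          ∀ j : Fin ℓ, i < j → u j ∉ C}
        {C : Set V | S ⊂ C ∧ (G.induce C).Connected ∧ u i' ∈ C ∧
          ∀ j : Fin ℓ, i' < j → u j ∉ C}) ∧
    (⋃ i : Fin ℓ, {C : Set V | S ⊂ C ∧ (G.induce C).Connected ∧ u i ∈ C ∧
          ∀ j : Fin ℓ, i < j → u j ∉ C}) =
      {C : Set V | S ⊂ C ∧ (G.induce C).Connected} := by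
  classical
  -- key: every connected proper superset contains some u i
  have key : ∀ C : Set V, S ⊂ C → (G.induce C).Connected →
      ∃! i : Fin ℓ, u i ∈ C ∧ ∀ j : Fin ℓ, i < j → u j ∉ C := by
    intro C hSC hCconn
    -- find a vertex of range u inside C
    obtain ⟨s, hs⟩ := hS
    obtain ⟨c, hcC, hcS⟩ := Set.exists_of_ssubset hSC
    have hsC : s ∈ C := hSC.1 hs
    obtain ⟨p⟩ := hCconn ⟨s, hsC⟩ ⟨c, hcC⟩
    obtain ⟨v, w, hvT, hwT, hadj⟩ :=
      cross_walk (G.induce C) {x : C | (x : V) ∈ S} p hs hcS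
    have hwu : (w : V) ∈ Set.range u := by
      rw [hrange]
      refine ⟨Set.mem_biUnion hvT ?_, hwT⟩
      exact hadj
    obtain ⟨i₀, hi₀⟩ := hwu
    have hne : (Finset.univ.filter (fun i : Fin ℓ => u i ∈ C)).Nonempty :=
      ⟨i₀, by simp [hi₀, w.2]⟩
    set F := Finset.univ.filter (fun i : Fin ℓ => u i ∈ C)
    refine ⟨F.max' hne, ⟨?_, ?_⟩, ?_⟩
    · have := F.max'_mem hne
      simpa [F] using this
    · intro j hj hjC
      have hjF : j ∈ F := by simp [F, hjC]
      exact absurd (F.le_max' j hjF) (not_le.mpr hj)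
    · rintro i ⟨hiC, hmax⟩
      have hiF : i ∈ F := by simp [F, hiC]
      have h1 : i ≤ F.max' hne := F.le_max' i hiF
      rcases lt_or_eq_of_le h1 with h | h
      · exact absurd (by simpa [F] using F.max'_mem hne) (hmax _ h)
      · exact h
  refine ⟨key, ?_, ?_⟩
  · intro i i' hne
    rw [Set.disjoint_left]
    rintro C ⟨h1, h2, h3, h4⟩ ⟨_, _, h3', h4'⟩
    rcases lt_or_gt_of_ne hne with h | h
    · exact h4 i' h h3'
    · exact h4' i h h3
  · ext C
    simp only [Set.mem_iUnion, Set.mem_setOf_eq]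
    constructor
    · rintro ⟨i, h1, h2, _⟩; exact ⟨h1, h2⟩
    · rintro ⟨h1, h2⟩
      obtain ⟨i, ⟨hi1, hi2⟩, -⟩ := key C h1 h2
      exact ⟨i, h1, h2, hi1, hi2⟩
end

section
/- Let G be a finite simple undirected graph on n vertices with maximum degree Δ ≥ 2, and let k ≥ 1 be an integer. Then the number of vertex sets C ⊆ V with |C| = k such that the induced subgraph G[C] is connected is at most n · (eΔ)^k / ((Δ − 1) · k), where e is Euler's number. -/
/-!
Explore a connected `k`-set `C ∋ v` breadth first: step `i` expands the `i`-th discovered vertex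
`u` and records the positions `j < Δ` of its newly discovered neighbours in a fixed enumeration
of `N(u)`. The `k - 1` recorded pairs `(i, j) ∈ [k] × [Δ]` suffice to replay the exploration, so
they determine `C`, and at most `C(kΔ, k - 1) ≤ e^k Δ^(k-1)` such sets contain `v`. Double
counting the pairs `v ∈ C` gives `k · #{C} ≤ n e^k Δ^(k-1)`, and `Δ^(k-1) ≤ Δ^k / (Δ - 1)`.
-/

open Finset

namespace SimpleGraph

variable {V : Type*}

theorem eq_of_adj_closed_of_induce_connected {G : SimpleGraph V} {C S : Set V}
    (hC : (G.induce C).Connected) (hSC : S ⊆ C) (hS : S.Nonempty)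
    (hclosed : ∀ x ∈ S, ∀ y ∈ C, G.Adj x y → y ∈ S) : S = C := by
  refine hSC.antisymm fun y hy => ?_
  obtain ⟨x, hx⟩ := hS
  have walk_mem : ∀ {a b : C}, (G.induce C).Walk a b → (a : V) ∈ S → (b : V) ∈ S := by
    intro a b p
    induction p with
    | nil => exact id
    | cons hadj _ ih => exact fun ha => ih (hclosed _ ha _ (Subtype.prop _) hadj)
  exact walk_mem (hC ⟨x, hSC hx⟩ ⟨y, hy⟩).some hx

section Exploration

variable [DecidableEq V] (G : SimpleGraph V) [G.LocallyFinite]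

noncomputable def neighborIndex (u x : V) : ℕ := (G.neighborFinset u).toList.idxOf x

theorem neighborIndex_lt_degree {u x : V} (hx : G.Adj u x) : G.neighborIndex u x < G.degree u := by
  rwa [neighborIndex, ← card_neighborFinset_eq_degree, ← length_toList, List.idxOf_lt_length_iff,
    mem_toList, mem_neighborFinset]

theorem neighborIndex_injOn (u : V) : Set.InjOn (G.neighborIndex u) (G.neighborSet u) :=
  fun _ hx _ _ h => (List.idxOf_inj (mem_toList.2 ((mem_neighborFinset G u _).2 hx))).1 h

def unvisitedNeighbors (C : Finset V) (L : List V) (u : V) : Finset V :=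
  (G.neighborFinset u ∩ C) \ L.toFinset

noncomputable def bfsStep (C : Finset V) (L : List V) (i : ℕ) : List V :=
  match L[i]? with
  | none => L
  | some u => L ++ (G.unvisitedNeighbors C L u).toList

noncomputable def bfs (C : Finset V) (v : V) : ℕ → List V
  | 0 => [v]
  | m + 1 => G.bfsStep C (bfs C v m) m

noncomputable def bfsCode (C : Finset V) (v : V) (i : ℕ) : Finset ℕ :=
  match (G.bfs C v i)[i]? with
  | none => ∅
  | some u => (G.unvisitedNeighbors C (G.bfs C v i) u).image (G.neighborIndex u)

noncomputable def bfsEncoding (C : Finset V) (v : V) (k : ℕ) : Finset (Σ _ : ℕ, ℕ) :=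
  (range k).sigma (G.bfsCode C v)

variable {G} {C : Finset V} {v : V}

theorem bfs_succ_of_getElem?_eq_some {m : ℕ} {u : V} (h : (G.bfs C v m)[m]? = some u) :
    G.bfs C v (m + 1) = G.bfs C v m ++ (G.unvisitedNeighbors C (G.bfs C v m) u).toList := by
  rw [bfs, bfsStep, h]

theorem bfs_succ_of_getElem?_eq_none {m : ℕ} (h : (G.bfs C v m)[m]? = none) :
    G.bfs C v (m + 1) = G.bfs C v m := by
  rw [bfs, bfsStep, h]

theorem bfsCode_of_getElem?_eq_some {i : ℕ} {u : V} (h : (G.bfs C v i)[i]? = some u) :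
    G.bfsCode C v i = (G.unvisitedNeighbors C (G.bfs C v i) u).image (G.neighborIndex u) := by
  rw [bfsCode, h]

theorem bfsCode_of_getElem?_eq_none {i : ℕ} (h : (G.bfs C v i)[i]? = none) :
    G.bfsCode C v i = ∅ := by
  rw [bfsCode, h]

theorem bfs_prefix_bfs {m m' : ℕ} (h : m ≤ m') : G.bfs C v m <+: G.bfs C v m' := by
  induction h with
  | refl => exact List.prefix_refl _
  | @step m' _ ih =>
    refine ih.trans ?_
    cases hu : (G.bfs C v m')[m']? with
    | none => rw [bfs_succ_of_getElem?_eq_none hu]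
    | some u => rw [bfs_succ_of_getElem?_eq_some hu]; exact List.prefix_append _ _

theorem mem_of_mem_bfs (hv : v ∈ C) {m : ℕ} {x : V} (hx : x ∈ G.bfs C v m) : x ∈ C := by
  induction m generalizing x with
  | zero => simp_all [bfs]
  | succ m ih =>
    cases hu : (G.bfs C v m)[m]? with
    | none => rw [bfs_succ_of_getElem?_eq_none hu] at hx; exact ih hx
    | some u =>
      rw [bfs_succ_of_getElem?_eq_some hu, List.mem_append, mem_toList] at hx
      rcases hx with hx | hx
      · exact ih hx
      · simp only [unvisitedNeighbors, mem_sdiff, mem_inter] at hx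
        exact hx.1.2

theorem bfs_nodup (m : ℕ) : (G.bfs C v m).Nodup := by
  induction m with
  | zero => simp [bfs]
  | succ m ih =>
    cases hu : (G.bfs C v m)[m]? with
    | none => rwa [bfs_succ_of_getElem?_eq_none hu]
    | some u =>
      rw [bfs_succ_of_getElem?_eq_some hu]
      refine ih.append (nodup_toList _) fun x hx hx' => ?_
      simp only [mem_toList, unvisitedNeighbors, mem_sdiff] at hx'
      exact hx'.2 (List.mem_toFinset.2 hx)

theorem length_bfs_le_card (hv : v ∈ C) (m : ℕ) : (G.bfs C v m).length ≤ #C := by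
  rw [← List.toFinset_card_of_nodup (bfs_nodup m)]
  exact card_le_card fun _ hx => mem_of_mem_bfs hv (List.mem_toFinset.1 hx)

theorem bfs_eq_of_length_le {m m' : ℕ} (hlen : (G.bfs C v m).length ≤ m) (h : m ≤ m') :
    G.bfs C v m' = G.bfs C v m := by
  induction h with
  | refl => rfl
  | @step m' hm ih =>
    rw [bfs_succ_of_getElem?_eq_none (by rw [ih]; exact List.getElem?_eq_none (hlen.trans hm)), ih]

theorem mem_bfs_of_adj {m : ℕ} (hlen : (G.bfs C v m).length ≤ m) {x y : V}
    (hx : x ∈ G.bfs C v m) (hy : y ∈ C) (hxy : G.Adj x y) : y ∈ G.bfs C v m := by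
  obtain ⟨i, hi, rfl⟩ := List.mem_iff_getElem.1 hx
  have hi' : i < (G.bfs C v i).length := by
    by_contra! h
    rw [bfs_eq_of_length_le h (m' := m) (by omega)] at hi
    omega
  have hxi : (G.bfs C v i)[i]? = some (G.bfs C v m)[i] := by
    rw [List.getElem?_eq_getElem hi', (bfs_prefix_bfs (m' := m) (by omega)).getElem hi']
  by_cases hyi : y ∈ G.bfs C v i
  · exact (bfs_prefix_bfs (by omega)).subset hyi
  · have : y ∈ G.bfs C v (i + 1) := by
      rw [bfs_succ_of_getElem?_eq_some hxi, List.mem_append, mem_toList]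
      simp only [unvisitedNeighbors, mem_sdiff, mem_inter, mem_neighborFinset,
        List.mem_toFinset]
      exact .inr ⟨⟨hxy, hy⟩, hyi⟩
    exact (bfs_prefix_bfs (by omega)).subset this

theorem toFinset_bfs_card (hv : v ∈ C) (hC : (G.induce (C : Set V)).Connected) :
    (G.bfs C v #C).toFinset = C := by
  have hsub : ((G.bfs C v #C).toFinset : Set V) ⊆ C :=
    fun _ hx => mem_of_mem_bfs hv (List.mem_toFinset.1 hx)
  have hv' : v ∈ G.bfs C v #C := (bfs_prefix_bfs (Nat.zero_le _)).subset (by simp [bfs])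
  refine coe_inj.1 (eq_of_adj_closed_of_induce_connected hC hsub ⟨v, by simpa⟩ ?_)
  intro x hx y hy hxy
  simpa using mem_bfs_of_adj (length_bfs_le_card hv _) (by simpa using hx) hy hxy

theorem length_bfs (m : ℕ) :
    (G.bfs C v m).length = 1 + ∑ i ∈ range m, #(G.bfsCode C v i) := by
  induction m with
  | zero => simp [bfs]
  | succ m ih =>
    rw [sum_range_succ, ← add_assoc, ← ih]
    cases hu : (G.bfs C v m)[m]? with
    | none => simp [bfs_succ_of_getElem?_eq_none hu, bfsCode_of_getElem?_eq_none hu]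
    | some u =>
      rw [bfs_succ_of_getElem?_eq_some hu, bfsCode_of_getElem?_eq_some hu, List.length_append,
        length_toList, card_image_of_injOn]
      refine (G.neighborIndex_injOn u).mono fun x hx => ?_
      simp only [unvisitedNeighbors, coe_sdiff, coe_inter, coe_neighborFinset] at hx
      exact hx.1.1

theorem bfsCode_subset_range {Δ : ℕ} (hΔ : ∀ u, G.degree u ≤ Δ) (i : ℕ) :
    G.bfsCode C v i ⊆ range Δ := by
  cases hu : (G.bfs C v i)[i]? with
  | none => simp [bfsCode_of_getElem?_eq_none hu]
  | some u =>
    rw [bfsCode_of_getElem?_eq_some hu]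
    intro j hj
    obtain ⟨x, hx, rfl⟩ := mem_image.1 hj
    simp only [unvisitedNeighbors, mem_sdiff, mem_inter, mem_neighborFinset] at hx
    exact mem_range.2 ((G.neighborIndex_lt_degree hx.1.1).trans_le (hΔ u))

/-- Replaying the exploration works since `neighborIndex u` is injective on `N(u)`. -/
theorem bfs_eq_of_bfsCode_eq {C₁ C₂ : Finset V} {m : ℕ}
    (h : ∀ i < m, G.bfsCode C₁ v i = G.bfsCode C₂ v i) : G.bfs C₁ v m = G.bfs C₂ v m := by
  induction m with
  | zero => rfl
  | succ m ih =>
    have hL := ih fun i hi => h i (by omega)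
    cases hu : (G.bfs C₁ v m)[m]? with
    | none =>
      rw [bfs_succ_of_getElem?_eq_none hu, bfs_succ_of_getElem?_eq_none (hL ▸ hu), hL]
    | some u =>
      have hcode := h m (by omega)
      rw [bfsCode_of_getElem?_eq_some hu, bfsCode_of_getElem?_eq_some (hL ▸ hu), ← hL] at hcode
      rw [bfs_succ_of_getElem?_eq_some hu, bfs_succ_of_getElem?_eq_some (hL ▸ hu), ← hL]
      have hsub : ∀ D : Finset V,
          (G.unvisitedNeighbors D (G.bfs C₁ v m) u : Set V) ⊆ G.neighborSet u := by
        intro D x hx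
        simp only [unvisitedNeighbors, coe_sdiff, coe_inter, coe_neighborFinset] at hx
        exact hx.1.1
      rw [← coe_inj, coe_image, coe_image,
        (G.neighborIndex_injOn u).image_eq_image_iff (hsub C₁) (hsub C₂), coe_inj] at hcode
      rw [hcode]

theorem card_bfsEncoding (hv : v ∈ C) (hC : (G.induce (C : Set V)).Connected) :
    #(G.bfsEncoding C v #C) = #C - 1 := by
  have hlen := length_bfs (G := G) (C := C) (v := v) #C
  rw [← List.toFinset_card_of_nodup (bfs_nodup _), toFinset_bfs_card hv hC] at hlen
  rw [bfsEncoding, card_sigma]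
  omega

theorem eq_of_bfsEncoding_eq {C₁ C₂ : Finset V} (hcard : #C₁ = #C₂) (hv₁ : v ∈ C₁)
    (hv₂ : v ∈ C₂) (hC₁ : (G.induce (C₁ : Set V)).Connected)
    (hC₂ : (G.induce (C₂ : Set V)).Connected)
    (h : G.bfsEncoding C₁ v #C₁ = G.bfsEncoding C₂ v #C₁) : C₁ = C₂ := by
  have hcode : ∀ i < #C₁, G.bfsCode C₁ v i = G.bfsCode C₂ v i := by
    intro i hi
    ext j
    simpa [bfsEncoding, hi] using congrArg (⟨i, j⟩ ∈ ·) h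
  rw [← toFinset_bfs_card hv₁ hC₁, ← toFinset_bfs_card hv₂ hC₂, bfs_eq_of_bfsCode_eq hcode,
    hcard]

theorem card_le_choose_of_induce_connected {k Δ : ℕ} (hΔ : ∀ u, G.degree u ≤ Δ)
    {𝒜 : Finset (Finset V)} (h𝒜 : ∀ C ∈ 𝒜, #C = k ∧ v ∈ C ∧ (G.induce (C : Set V)).Connected) :
    #𝒜 ≤ (k * Δ).choose (k - 1) := by
  have hmaps : Set.MapsTo (fun C => G.bfsEncoding C v k) 𝒜
      (((range k).sigma fun _ => range Δ).powersetCard (k - 1)) := by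
    intro C hC
    obtain ⟨rfl, hv, hconn⟩ := h𝒜 C hC
    exact mem_powersetCard.2
      ⟨sigma_mono subset_rfl (bfsCode_subset_range hΔ), card_bfsEncoding hv hconn⟩
  have hinj : Set.InjOn (fun C => G.bfsEncoding C v k) 𝒜 := by
    intro C₁ h₁ C₂ h₂ h
    obtain ⟨hk₁, hv₁, hC₁⟩ := h𝒜 C₁ h₁
    obtain ⟨hk₂, hv₂, hC₂⟩ := h𝒜 C₂ h₂
    subst hk₁
    exact eq_of_bfsEncoding_eq hk₂.symm hv₁ hv₂ hC₁ hC₂ h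
  simpa [card_sigma, mul_comm] using card_le_card_of_injOn _ hmaps hinj

end Exploration

end SimpleGraph

theorem Nat.choose_mul_le_exp_mul_pow (k Δ : ℕ) :
    ((k * Δ).choose (k - 1) : ℝ) ≤ Real.exp 1 ^ k * (Δ : ℝ) ^ (k - 1) := by
  obtain _ | r := k
  · simp
  have hexp : ((r + 1 : ℕ) : ℝ) ^ (r + 1) / (r + 1).factorial ≤ Real.exp 1 ^ (r + 1) := by
    simpa [← Real.exp_nat_mul] using
      Real.pow_div_factorial_le_exp (r + 1 : ℝ) (by positivity) (r + 1)
  calc (((r + 1) * Δ).choose (r + 1 - 1) : ℝ)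
      ≤ (((r + 1) * Δ : ℕ) : ℝ) ^ r / r.factorial := by
        simpa using Nat.choose_le_pow_div r ((r + 1) * Δ)
    _ = ((r + 1 : ℕ) : ℝ) ^ (r + 1) / (r + 1).factorial * (Δ : ℝ) ^ r := by
        rw [Nat.factorial_succ, Nat.cast_mul, Nat.cast_mul, mul_pow, pow_succ]
        field_simp
    _ ≤ Real.exp 1 ^ (r + 1) * (Δ : ℝ) ^ (r + 1 - 1) := by
        rw [Nat.add_sub_cancel]; gcongr

theorem card_connected_induced_subgraphs_le_general {V : Type*} [Fintype V]
    (G : SimpleGraph V) [DecidableRel G.Adj] (k : ℕ) (hk : 1 ≤ k)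
    (hΔ : 2 ≤ G.maxDegree) :
    (Set.ncard {C : Finset V | C.card = k ∧ (G.induce (C : Set V)).Connected} : ℝ) ≤
      (Fintype.card V : ℝ) * (Real.exp 1 * (G.maxDegree : ℝ)) ^ k /
        (((G.maxDegree : ℝ) - 1) * (k : ℝ)) := by
  classical
  set Δ := G.maxDegree
  set 𝒜 := ({C | #C = k ∧ (G.induce (C : Set V)).Connected} : Finset (Finset V))
  have hcount : #𝒜 * k ≤ Fintype.card V * (k * Δ).choose (k - 1) := by
    refine card_mul_le_card_mul (fun C v => v ∈ C) (fun C hC => ?_) fun v _ =>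
      G.card_le_choose_of_induce_connected (v := v) G.degree_le_maxDegree fun C hC => ?_
    · simp_all [bipartiteAbove, 𝒜]
    · simp_all [bipartiteBelow, 𝒜]
  have hpow : (Δ : ℝ) ^ (k - 1) * (Δ - 1) ≤ (Δ : ℝ) ^ k := by
    rw [← Nat.sub_add_cancel hk, pow_succ, Nat.add_sub_cancel]
    nlinarith [pow_pos (by positivity : (0 : ℝ) < Δ) (k - 1)]
  have hchoose := Nat.choose_mul_le_exp_mul_pow k Δ
  have hΔ1 : (1 : ℝ) ≤ Δ - 1 := by
    have : (2 : ℝ) ≤ Δ := by exact_mod_cast hΔ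
    linarith
  have hkR : (1 : ℝ) ≤ k := by exact_mod_cast hk
  rw [show {C : Finset V | #C = k ∧ (G.induce (C : Set V)).Connected} = ↑𝒜 by ext; simp [𝒜],
    Set.ncard_coe_finset, le_div_iff₀ (by nlinarith), mul_pow]
  calc (#𝒜 : ℝ) * ((Δ - 1) * k) = (#𝒜 * k : ℕ) * (Δ - 1) := by push_cast; ring
    _ ≤ (Fintype.card V * (k * Δ).choose (k - 1) : ℕ) * (Δ - 1) := by gcongr
    _ ≤ Fintype.card V * (Real.exp 1 ^ k * Δ ^ (k - 1)) * (Δ - 1) := by push_cast; gcongr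
    _ ≤ Fintype.card V * (Real.exp 1 ^ k * Δ ^ k) := by
        rw [mul_assoc, mul_assoc]; gcongr

/-- The number of connected induced subgraphs of size `k` in a graph on `n` vertices with
maximum degree `Δ ≥ 2` is at most `n · (eΔ)^k / ((Δ − 1) · k)` for `k ≥ 1`. -/
theorem card_connected_induced_subgraphs_le {V : Type*} [Fintype V] [DecidableEq V]
    (G : SimpleGraph V) [DecidableRel G.Adj] (k : ℕ) (hk : 1 ≤ k)
    (hΔ : 2 ≤ G.maxDegree) :
    (Set.ncard {C : Finset V | C.card = k ∧ (G.induce (C : Set V)).Connected} : ℝ) ≤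
      (Fintype.card V : ℝ) * (Real.exp 1 * (G.maxDegree : ℝ)) ^ k /
        (((G.maxDegree : ℝ) - 1) * (k : ℝ)) :=
  card_connected_induced_subgraphs_le_general G k hk hΔ
end
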